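/- arXiv:1507.04879 — 8 statements merged into one kernel-verified Lean document; each statement's English description precedes it below -/
import Mathlib

section
/- If x₀ is a periodic point of f^n with least period k, then x₀ is a periodic point of f with least period kn/s for some positive integer s that divides n and is relatively prime to k. -/
/-- `x` has least period `m` under `f`. -/
def IsLeastPeriod (f : ℝ → ℝ) (x : ℝ) (m : ℕ) : Prop :=
  0 < m ∧ f^[m] x = x ∧ ∀ k, 0 < k → k < m → f^[k] x ≠ x

/-- If `x₀` is a periodic point of `f^[n]` with least period `k`, then `x₀` is a
periodic point of `f` with least period `k * n / s` for some positive `s` dividing `n`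
and coprime to `k`. -/
theorem least_period_of_iterate {a b : ℝ} (hab : a ≤ b) (f : ℝ → ℝ)
    (hf : ContinuousOn f (Set.Icc a b)) (hmaps : Set.MapsTo f (Set.Icc a b) (Set.Icc a b))
    (x₀ : ℝ) (hx₀ : x₀ ∈ Set.Icc a b) (n k : ℕ) (hn : 0 < n) (hk : 0 < k)
    (h : IsLeastPeriod (f^[n]) x₀ k) :
    ∃ s : ℕ, 0 < s ∧ s ∣ n ∧ Nat.Coprime s k ∧ IsLeastPeriod f x₀ (k * n / s) := by
  obtain ⟨-, hper, hleast⟩ := h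
  -- x₀ is a periodic point of f with period n*k
  have hpt : Function.IsPeriodicPt f (n * k) x₀ := by
    have : Function.IsPeriodicPt (f^[n]) k x₀ := hper
    simpa [Function.IsPeriodicPt, Function.IsFixedPt, Function.iterate_mul] using this
  have hnk : 0 < n * k := Nat.mul_pos hn hk
  set m := Function.minimalPeriod f x₀ with hm
  have hmpos : 0 < m := hpt.minimalPeriod_pos hnk
  have hd : 0 < Nat.gcd m n := Nat.gcd_pos_of_pos_left _ hmpos
  -- minimal period of f^[n] at x₀ equals k
  have hkeq : Function.minimalPeriod (f^[n]) x₀ = k := by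
    apply le_antisymm
    · exact Function.IsPeriodicPt.minimalPeriod_le hk hper
    · by_contra hlt
      push_neg at hlt
      have hp : Function.IsPeriodicPt (f^[n]) (Function.minimalPeriod (f^[n]) x₀) x₀ :=
        Function.iterate_minimalPeriod
      have hpos : 0 < Function.minimalPeriod (f^[n]) x₀ := by
        have : Function.IsPeriodicPt (f^[n]) k x₀ := hper
        exact this.minimalPeriod_pos hk
      exact hleast _ hpos hlt hp
  have hdiv : k = m / Nat.gcd m n := by
    rw [← hkeq, Function.minimalPeriod_iterate_eq_div_gcd hn.ne']
  set d := Nat.gcd m n with hdd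
  have hdm : d ∣ m := Nat.gcd_dvd_left _ _
  have hdn : d ∣ n := Nat.gcd_dvd_right _ _
  have hmkd : m = k * d := by
    rw [hdiv, Nat.div_mul_cancel hdm]
  set s := n / d with hs
  have hns : n = d * s := (Nat.div_mul_cancel hdn).symm.trans (Nat.mul_comm _ _)
  have hspos : 0 < s := Nat.div_pos (Nat.le_of_dvd hn hdn) hd
  have hsdvd : s ∣ n := Nat.div_dvd_of_dvd hdn
  have hcop : Nat.Coprime s k := by
    have : d = d * Nat.gcd k s := by
      conv_lhs => rw [hdd, hmkd, hns]
      rw [Nat.mul_comm k d, Nat.gcd_mul_left]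
    have hg : Nat.gcd k s = 1 := by
      have h2 : d * Nat.gcd k s = d * 1 := by omega
      exact Nat.eq_of_mul_eq_mul_left hd h2
    exact Nat.coprime_comm.mp hg
  have hkns : k * n / s = m := by
    rw [hns, hmkd, Nat.mul_comm d s, ← Nat.mul_assoc, Nat.mul_comm k s, Nat.mul_assoc,
      Nat.mul_div_cancel_left _ hspos]
  refine ⟨s, hspos, hsdvd, hcop, ?_⟩
  rw [hkns]
  exact ⟨hmpos, Function.iterate_minimalPeriod,
    fun j hj hjm => Function.not_isPeriodicPt_of_pos_of_lt_minimalPeriod hj.ne' hjm⟩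
end

section
/- If f^{2^{i-1}} has a periodic point of least period 2j for some integers i ≥ 2 and j ≥ 1, then f has a periodic point of least period 2^i · j. -/
/-!
The point itself does the job. If `x` has least period `q` under `f`, its least period under
`f^[p ^ n]` is `q / gcd q (p ^ n)`. When that quotient is still divisible by the prime `p`, the gcd
must be all of `p ^ n`: a smaller power `p ^ s` would leave `p ^ (s + 1)` dividing both `q` and
`p ^ n`. Hence `q = p ^ (n + 1) * m` whenever the least period under `f^[p ^ n]` is `p * m`.
-/

open Function

theorem Nat.eq_prime_pow_mul_of_div_gcd_prime_pow_eq {p n m q : ℕ} (hp : p.Prime)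
    (h : q / q.gcd (p ^ n) = p * m) : q = p ^ (n + 1) * m := by
  set d := q.gcd (p ^ n)
  have hq : q = p * m * d := by rw [← h, Nat.div_mul_cancel (Nat.gcd_dvd_left _ _)]
  obtain ⟨s, hsn, hd⟩ : ∃ s ≤ n, d = p ^ s :=
    (Nat.dvd_prime_pow hp).mp (Nat.gcd_dvd_right _ _)
  suffices s = n by rw [hq, hd, this, pow_succ']; ring
  by_contra hne
  have hq' : p ^ (s + 1) ∣ q := ⟨m, by rw [hq, hd, pow_succ']; ring⟩
  have hd' : p ^ (s + 1) ∣ d := Nat.dvd_gcd hq' (Nat.pow_dvd_pow p (by omega))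
  rw [hd, Nat.pow_dvd_pow_iff_le_right hp.one_lt] at hd'
  omega

theorem Function.minimalPeriod_eq_prime_pow_mul_of_minimalPeriod_iterate {α : Type*}
    {f : α → α} {x : α} {p n m : ℕ} (hp : p.Prime) (h : minimalPeriod f^[p ^ n] x = p * m) :
    minimalPeriod f x = p ^ (n + 1) * m :=
  Nat.eq_prime_pow_mul_of_div_gcd_prime_pow_eq hp <| by
    rwa [← minimalPeriod_iterate_eq_div_gcd (pow_ne_zero n hp.ne_zero)]

theorem isLeastPeriod_iff_minimalPeriod_eq {f : ℝ → ℝ} {x : ℝ} {m : ℕ} :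
    IsLeastPeriod f x m ↔ 0 < m ∧ minimalPeriod f x = m := by
  constructor
  · rintro ⟨hm, hper, hmin⟩
    refine ⟨hm, le_antisymm (IsPeriodicPt.minimalPeriod_le hm hper) ?_⟩
    by_contra! hlt
    exact hmin _ (IsPeriodicPt.minimalPeriod_pos hm hper) hlt iterate_minimalPeriod
  · rintro ⟨hm, rfl⟩
    exact ⟨hm, iterate_minimalPeriod, fun k hk hlt =>
      not_isPeriodicPt_of_pos_of_lt_minimalPeriod hk.ne' hlt⟩

theorem period_doubling_general {a b : ℝ} (f : ℝ → ℝ)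
    (i j : ℕ) (hi : 2 ≤ i)
    (h : ∃ x ∈ Set.Icc a b, IsLeastPeriod (f^[2 ^ (i - 1)]) x (2 * j)) :
    ∃ y ∈ Set.Icc a b, IsLeastPeriod f y (2 ^ i * j) := by
  obtain ⟨x, hx, hx_least⟩ := h
  obtain ⟨hpos, hmin⟩ := isLeastPeriod_iff_minimalPeriod_eq.mp hx_least
  have hmin_f := minimalPeriod_eq_prime_pow_mul_of_minimalPeriod_iterate Nat.prime_two hmin
  rw [Nat.sub_add_cancel (by omega : 1 ≤ i)] at hmin_f
  refine ⟨x, hx, isLeastPeriod_iff_minimalPeriod_eq.mpr ⟨?_, hmin_f⟩⟩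
  exact Nat.mul_pos (by positivity) (by omega)

/-- If `f^[2^(i-1)]` has a periodic point of least period `2j` for some `i ≥ 2`
and `j ≥ 1`, then `f` has a periodic point of least period `2^i * j`. -/
theorem period_doubling {a b : ℝ} (hab : a ≤ b) (f : ℝ → ℝ)
    (hf : ContinuousOn f (Set.Icc a b)) (hmaps : Set.MapsTo f (Set.Icc a b) (Set.Icc a b))
    (i j : ℕ) (hi : 2 ≤ i) (hj : 1 ≤ j)
    (h : ∃ x ∈ Set.Icc a b, IsLeastPeriod (f^[2 ^ (i - 1)]) x (2 * j)) :
    ∃ y ∈ Set.Icc a b, IsLeastPeriod f y (2 ^ i * j) :=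
  period_doubling_general f i j hi h
end

section
/- If a continuous map f : I → I of a compact interval has a periodic point of least period m with m ≥ 2, then f has a periodic point of least period 2. -/
/-- Structural lemma: given `y₀ < u` with `f y₀ ≥ u` and `f u < u`, find `c < z < u`
with `f c = u`, `f z = z`, `f < u` on `(c, u]`, and `f > id` on `[c, z)`. -/
private lemma lemA {a b : ℝ} {f : ℝ → ℝ} (hf : ContinuousOn f (Set.Icc a b))
    {u y₀ : ℝ} (ha : a ≤ y₀) (hyu : y₀ < u) (hub : u ≤ b)
    (hfy : u ≤ f y₀) (hfu : f u < u) :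
    ∃ c z, y₀ ≤ c ∧ c < z ∧ z < u ∧ f c = u ∧ f z = z ∧
      (∀ v, c < v → v ≤ u → f v < u) ∧ (∀ y, c ≤ y → y < z → y < f y) := by
  have hsub : Set.Icc y₀ u ⊆ Set.Icc a b := Set.Icc_subset_Icc ha hub
  have hf1 : ContinuousOn f (Set.Icc y₀ u) := hf.mono hsub
  set T : Set ℝ := Set.Icc y₀ u ∩ f ⁻¹' {u} with hT
  have hTne : T.Nonempty := by
    obtain ⟨y₁, hy₁, hfy₁⟩ := intermediate_value_Icc' hyu.le hf1 ⟨hfu.le, hfy⟩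
    exact ⟨y₁, hy₁, hfy₁⟩
  have hTclosed : IsClosed T :=
    hf1.preimage_isClosed_of_isClosed isClosed_Icc isClosed_singleton
  have hTbdd : BddAbove T := ⟨u, fun y hy => hy.1.2⟩
  obtain ⟨⟨hy₀c, hcu⟩, hfc0⟩ := hTclosed.csSup_mem hTne hTbdd
  set c := sSup T with hcdef
  have hfc : f c = u := hfc0
  have hcu' : c < u := lt_of_le_of_ne hcu fun h => by
    rw [h] at hfc; exact absurd hfc (ne_of_lt hfu)
  have hlt : ∀ v, c < v → v ≤ u → f v < u := by
    intro v hcv hvu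
    by_contra hge
    push_neg at hge
    rcases eq_or_lt_of_le hvu with rfl | hvu'
    · exact absurd hge (not_le.mpr hfu)
    · obtain ⟨w, hw, hfw⟩ := intermediate_value_Icc' hvu'.le
        (hf1.mono (Set.Icc_subset_Icc (hy₀c.trans hcv.le) le_rfl)) ⟨hfu.le, hge⟩
      have hwT : w ∈ T := ⟨⟨hy₀c.trans (hcv.le.trans hw.1), hw.2⟩, hfw⟩
      have : w ≤ c := le_csSup hTbdd hwT
      exact absurd (hcv.trans_le hw.1) (not_lt.mpr this)
  have hgcont : ContinuousOn (fun y => f y - y) (Set.Icc c u) :=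
    (hf1.mono (Set.Icc_subset_Icc hy₀c le_rfl)).sub continuousOn_id
  set F : Set ℝ := Set.Icc c u ∩ (fun y => f y - y) ⁻¹' {0} with hF
  have hFne : F.Nonempty := by
    obtain ⟨z₁, hz₁, hgz₁⟩ := intermediate_value_Icc' hcu'.le hgcont
      (Set.mem_Icc.mpr ⟨by show f u - u ≤ 0; linarith,
        by show (0:ℝ) ≤ f c - c; rw [hfc]; linarith⟩)
    exact ⟨z₁, hz₁, hgz₁⟩
  have hFclosed : IsClosed F :=
    hgcont.preimage_isClosed_of_isClosed isClosed_Icc isClosed_singleton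
  have hFbdd : BddBelow F := ⟨c, fun y hy => hy.1.1⟩
  obtain ⟨⟨hcz, hzu⟩, hfz0⟩ := hFclosed.csInf_mem hFne hFbdd
  set z := sInf F with hzdef
  have hfz : f z = z := by have h0 : f z - z = 0 := hfz0; linarith
  have hcz' : c < z := lt_of_le_of_ne hcz fun h => by
    rw [← h, hfc] at hfz; exact absurd hfz (ne_of_gt hcu')
  have hzu' : z < u := lt_of_le_of_ne hzu fun h => by
    rw [h] at hfz; exact absurd hfz (ne_of_lt hfu)
  have hgt : ∀ y, c ≤ y → y < z → y < f y := by
    intro y hcy hyz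
    by_contra hle
    push_neg at hle
    rcases eq_or_lt_of_le hle with h | h
    · have hyF : y ∈ F := ⟨⟨hcy, by linarith⟩, by show f y - y = 0; linarith⟩
      have : z ≤ y := csInf_le hFbdd hyF
      linarith
    · rcases eq_or_lt_of_le hcy with h2 | h2
      · rw [← h2, hfc] at h; linarith
      · obtain ⟨w, hw, hgw⟩ := intermediate_value_Icc' h2.le
          (hgcont.mono (Set.Icc_subset_Icc le_rfl (by linarith)))
          (Set.mem_Icc.mpr ⟨by show f y - y ≤ 0; linarith,
            by show (0:ℝ) ≤ f c - c; rw [hfc]; linarith⟩)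
        have hfw : f w = w := by have h0 : f w - w = 0 := hgw; linarith
        have hwF : w ∈ F := ⟨⟨hw.1, by linarith [hw.2]⟩, by show f w - w = 0; linarith⟩
        have : z ≤ w := csInf_le hFbdd hwF
        linarith [hw.2]
  exact ⟨c, z, hy₀c, hcz', hzu', hfc, hfz, hlt, hgt⟩

/-- Machine lemma: under the no-2-cycle hypothesis, a point `u` with a companion
`y₀ < u`, `f y₀ ≥ u`, `f u ≤ y₀`, `f u < u` satisfies `f (f u) > u`. -/
private lemma lemB {a b : ℝ} {f : ℝ → ℝ} (hf : ContinuousOn f (Set.Icc a b))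
    (hmaps : Set.MapsTo f (Set.Icc a b) (Set.Icc a b))
    (hNP : ∀ w, w ∈ Set.Icc a b → f (f w) = w → f w = w)
    {u y₀ : ℝ} (ha : a ≤ y₀) (hyu : y₀ < u) (hub : u ≤ b)
    (hfy : u ≤ f y₀) (hfu : f u < u) (hfuy : f u ≤ y₀) :
    u < f (f u) := by
  obtain ⟨c, z, hy₀c, hcz, hzu, hfc, hfz, hlt, hgt⟩ := lemA hf ha hyu hub hfy hfu
  have hac : a ≤ c := ha.trans hy₀c
  have hgg : ContinuousOn (fun t => f (f t) - t) (Set.Icc a b) :=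
    (hf.comp hf hmaps).sub continuousOn_id
  have hc2 : f (f c) < c := by
    have h1 : f (f c) ≤ c := by rw [hfc]; exact hfuy.trans hy₀c
    rcases eq_or_lt_of_le h1 with h2 | h2
    · have h3 := hNP c (Set.mem_Icc.mpr ⟨hac, by linarith⟩) h2
      rw [hfc] at h3; linarith
    · exact h2
  have hOne : ∀ y, c ≤ y → y < z → f (f y) < y := by
    intro y hcy hyz
    by_contra hge
    push_neg at hge
    have hcy' : c < y := by
      rcases eq_or_lt_of_le hcy with h | h
      · exfalso; rw [← h] at hge; linarith
      · exact h
    obtain ⟨w, hw, hgw⟩ := intermediate_value_Icc hcy'.le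
      (hgg.mono (Set.Icc_subset_Icc hac (by linarith)))
      (Set.mem_Icc.mpr ⟨by show f (f c) - c ≤ 0; linarith,
        by show (0:ℝ) ≤ f (f y) - y; linarith⟩)
    have hww : f (f w) = w := by have h0 : f (f w) - w = 0 := hgw; linarith
    have hfww := hNP w (Set.mem_Icc.mpr ⟨hac.trans hw.1, by linarith [hw.2]⟩) hww
    have := hgt w hw.1 (lt_of_le_of_lt hw.2 hyz)
    linarith
  have hThree : ∀ v, z < v → v < u → f v < z := by
    intro v hzv hvu
    obtain ⟨y, hy, hfyv⟩ := intermediate_value_Icc' hcz.le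
      (hf.mono (Set.Icc_subset_Icc hac (by linarith)))
      (show v ∈ Set.Icc (f z) (f c) from
        Set.mem_Icc.mpr ⟨by rw [hfz]; exact hzv.le, by rw [hfc]; exact hvu.le⟩)
    have hyc : c < y := by
      rcases eq_or_lt_of_le hy.1 with h | h
      · exfalso; rw [← h, hfc] at hfyv; linarith
      · exact h
    have hyz : y < z := by
      rcases eq_or_lt_of_le hy.2 with h | h
      · exfalso; rw [h, hfz] at hfyv; linarith
      · exact h
    have := hOne y hyc.le hyz
    rw [hfyv] at this
    linarith
  obtain ⟨v₀, hv₀, hfv₀⟩ := intermediate_value_Icc' hzu.le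
    (hf.mono (Set.Icc_subset_Icc (by linarith) hub))
    (Set.mem_Icc.mpr ⟨hfuy.trans hy₀c, by rw [hfz]; exact hcz.le⟩)
  have hzv₀ : z < v₀ := by
    rcases eq_or_lt_of_le hv₀.1 with h | h
    · exfalso; rw [← h, hfz] at hfv₀; linarith
    · exact h
  have hv₀u : v₀ < u := by
    rcases eq_or_lt_of_le hv₀.2 with h | h
    · exfalso
      rw [h] at hfv₀
      have h2 : f (f u) = u := by rw [hfv₀]; exact hfc
      have h3 := hNP u (Set.mem_Icc.mpr ⟨by linarith, hub⟩) h2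
      linarith
    · exact h
  by_contra hcon2
  push_neg at hcon2
  have hffu : f (f u) < u := by
    rcases eq_or_lt_of_le hcon2 with h | h
    · exfalso
      have h3 := hNP u (Set.mem_Icc.mpr ⟨by linarith, hub⟩) h
      linarith
    · exact h
  obtain ⟨w, hw, hgw⟩ := intermediate_value_Icc' hv₀u.le
    (hgg.mono (Set.Icc_subset_Icc (by linarith) hub))
    (Set.mem_Icc.mpr ⟨by show f (f u) - u ≤ 0; linarith,
      by show (0:ℝ) ≤ f (f v₀) - v₀; rw [hfv₀, hfc]; linarith⟩)
  have hww : f (f w) = w := by have h0 : f (f w) - w = 0 := hgw; linarith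
  have hwu : w < u := by
    rcases eq_or_lt_of_le hw.2 with h | h
    · exfalso; rw [h] at hww; linarith
    · exact h
  have hfww := hNP w (Set.mem_Icc.mpr ⟨by linarith [hw.1], by linarith⟩) hww
  have := hThree w (by linarith [hw.1]) hwu
  linarith [hw.1]

/-- If a continuous self-map of a compact interval has a periodic point of
least period `m ≥ 2`, then it has a periodic point of least period `2`. -/
theorem period_two_of_periodic {a b : ℝ} (hab : a ≤ b) (f : ℝ → ℝ)
    (hf : ContinuousOn f (Set.Icc a b)) (hmaps : Set.MapsTo f (Set.Icc a b) (Set.Icc a b))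
    (m : ℕ) (hm : 2 ≤ m) (h : ∃ x ∈ Set.Icc a b, IsLeastPeriod f x m) :
    ∃ y ∈ Set.Icc a b, IsLeastPeriod f y 2 := by
  classical
  obtain ⟨x, hx, hm0, hmx, hleast⟩ := h
  by_contra hcon
  push_neg at hcon
  have hNP : ∀ w, w ∈ Set.Icc a b → f (f w) = w → f w = w := by
    intro w hw h2
    by_contra hne
    refine hcon w hw ⟨by norm_num, ?_, ?_⟩
    · have h3 : f^[2] w = f (f w) := by
        rw [show (2:ℕ) = 1 + 1 from rfl, Function.iterate_add_apply]
        simp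
      rw [h3, h2]
    · intro k hk0 hk2
      interval_cases k
      simpa using hne
  -- the orbit
  set O : Finset ℝ := (Finset.range m).image (fun i => f^[i] x) with hO
  have hxO : x ∈ O := Finset.mem_image.mpr ⟨0, Finset.mem_range.mpr (by omega), rfl⟩
  have hOI : ∀ y ∈ O, y ∈ Set.Icc a b := by
    intro y hy
    obtain ⟨i, hi, rfl⟩ := Finset.mem_image.mp hy
    exact (hmaps.iterate i) hx
  have hOf : ∀ y ∈ O, f y ∈ O := by
    intro y hy
    obtain ⟨i, hi, rfl⟩ := Finset.mem_image.mp hy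
    rw [← Function.iterate_succ_apply' f i x]
    rcases eq_or_lt_of_le (Nat.succ_le_of_lt (Finset.mem_range.mp hi)) with h | h
    · rw [h, hmx]; exact hxO
    · exact Finset.mem_image.mpr ⟨i + 1, Finset.mem_range.mpr h, rfl⟩
  have hOnf : ∀ y ∈ O, f y ≠ y := by
    intro y hy hfyy
    obtain ⟨i, hi, rfl⟩ := Finset.mem_image.mp hy
    have hi' : i < m := Finset.mem_range.mp hi
    have h1 : f^[m] x = f^[m - i] (f^[i] x) := by
      have hmi : m - i + i = m := by omega
      conv_lhs => rw [← hmi]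
      rw [Function.iterate_add_apply]
    have h2 : f^[m - i] (f^[i] x) = f^[i] x := Function.iterate_fixed hfyy (m - i)
    have hxy : x = f^[i] x := hmx.symm.trans (h1.trans h2)
    have hfx : f x = x := by rw [hxy]; exact hfyy
    have h4 := hleast 1 one_pos (by omega)
    simp only [Function.iterate_one] at h4
    exact h4 hfx
  have hOne : O.Nonempty := ⟨x, hxO⟩
  -- p and q
  have hμlt : O.min' hOne < f (O.min' hOne) :=
    lt_of_le_of_ne (O.min'_le _ (hOf _ (O.min'_mem hOne))) (Ne.symm (hOnf _ (O.min'_mem hOne)))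
  set D1 := O.filter (fun y => y < f y) with hD1
  have hD1ne : D1.Nonempty := ⟨O.min' hOne, Finset.mem_filter.mpr ⟨O.min'_mem hOne, hμlt⟩⟩
  set p := D1.max' hD1ne with hp
  have hpO : p ∈ O := (Finset.mem_filter.mp (D1.max'_mem hD1ne)).1
  have hpf : p < f p := (Finset.mem_filter.mp (D1.max'_mem hD1ne)).2
  have hpmax : ∀ y ∈ O, y < f y → y ≤ p := fun y hy hy2 =>
    D1.le_max' y (Finset.mem_filter.mpr ⟨hy, hy2⟩)
  set D2 := O.filter (fun y => p < y) with hD2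
  have hD2ne : D2.Nonempty := ⟨f p, Finset.mem_filter.mpr ⟨hOf p hpO, hpf⟩⟩
  set q := D2.min' hD2ne with hq
  have hqO : q ∈ O := (Finset.mem_filter.mp (D2.min'_mem hD2ne)).1
  have hpq : p < q := (Finset.mem_filter.mp (D2.min'_mem hD2ne)).2
  have hqmin : ∀ y ∈ O, p < y → q ≤ y := fun y hy hy2 =>
    D2.min'_le y (Finset.mem_filter.mpr ⟨hy, hy2⟩)
  have hqfp : q ≤ f p := hqmin _ (hOf p hpO) hpf
  have hfq : f q < q := by
    rcases lt_trichotomy (f q) q with h | h | h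
    · exact h
    · exact absurd h (hOnf q hqO)
    · exact absurd (hpmax q hqO h) (not_le.mpr hpq)
  have hfqp : f q ≤ p := by
    by_contra h
    push_neg at h
    exact absurd (hqmin _ (hOf q hqO) h) (not_le.mpr hfq)
  have hq2 : q < f (f q) :=
    lemB hf hmaps hNP (hOI p hpO).1 hpq (hOI q hqO).2 hqfp hfq hfqp
  -- M
  set M := O.max' hOne with hM
  have hMO : M ∈ O := O.max'_mem hOne
  have hqM : q < M := lt_of_lt_of_le hq2 (O.le_max' _ (hOf _ (hOf q hqO)))
  have hffM : f (f M) < M := by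
    rcases eq_or_lt_of_le (O.le_max' _ (hOf _ (hOf M hMO))) with h | h
    · exact absurd (hNP M (hOI M hMO) h) (hOnf M hMO)
    · exact h
  have haq : a ≤ q := (hOI q hqO).1
  have hMb : M ≤ b := (hOI M hMO).2
  have hgg : ContinuousOn (fun t => f (f t) - t) (Set.Icc a b) :=
    (hf.comp hf hmaps).sub continuousOn_id
  -- least fixed point of f ∘ f in [q, M]
  set Z : Set ℝ := Set.Icc q M ∩ (fun t => f (f t) - t) ⁻¹' {0} with hZ
  have hZne : Z.Nonempty := by
    obtain ⟨v₁, hv₁, hgv₁⟩ := intermediate_value_Icc' hqM.le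
      (hgg.mono (Set.Icc_subset_Icc haq hMb))
      (Set.mem_Icc.mpr ⟨by show f (f M) - M ≤ 0; linarith,
        by show (0:ℝ) ≤ f (f q) - q; linarith⟩)
    exact ⟨v₁, hv₁, hgv₁⟩
  have hZcl : IsClosed Z :=
    (hgg.mono (Set.Icc_subset_Icc haq hMb)).preimage_isClosed_of_isClosed
      isClosed_Icc isClosed_singleton
  have hZbdd : BddBelow Z := ⟨q, fun y hy => hy.1.1⟩
  obtain ⟨⟨hqv, hvM⟩, hgv⟩ := hZcl.csInf_mem hZne hZbdd
  set v := sInf Z with hv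
  have hffv : f (f v) = v := by have h0 : f (f v) - v = 0 := hgv; linarith
  have hqv' : q < v := lt_of_le_of_ne hqv fun h => by
    rw [← h] at hffv; linarith
  have hfv : f v = v := hNP v (Set.mem_Icc.mpr ⟨haq.trans hqv, hvM.trans hMb⟩) hffv
  have hmin : ∀ w, q ≤ w → w < v → f (f w) ≠ w := by
    intro w h1 h2 h3
    have hwZ : w ∈ Z := ⟨⟨h1, h2.le.trans hvM⟩, by show f (f w) - w = 0; linarith⟩
    have : v ≤ w := csInf_le hZbdd hwZ
    linarith
  -- key: f < q on (q, v)
  have hkey : ∀ u, q < u → u < v → f u < q := by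
    intro u hqu huv
    have hub : u ≤ b := (huv.le.trans hvM).trans hMb
    have hau : a ≤ u := haq.trans hqu.le
    have h1 : u < f (f u) := by
      rcases lt_trichotomy (f (f u)) u with h | h | h
      · exfalso
        obtain ⟨w, hw, hgw⟩ := intermediate_value_Icc' hqu.le
          (hgg.mono (Set.Icc_subset_Icc haq hub))
          (Set.mem_Icc.mpr ⟨by show f (f u) - u ≤ 0; linarith,
            by show (0:ℝ) ≤ f (f q) - q; linarith⟩)
        have hww : f (f w) = w := by have h0 : f (f w) - w = 0 := hgw; linarith
        exact hmin w hw.1 (lt_of_le_of_lt hw.2 huv) hww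
      · exact absurd h (hmin u hqu.le huv)
      · exact h
    have h2 : f u < u := by
      rcases lt_trichotomy (f u) u with h | h | h
      · exact h
      · exfalso; exact hmin u hqu.le huv (by rw [h]; exact h)
      · exfalso
        obtain ⟨w, hw, hgw⟩ := intermediate_value_Icc hqu.le
          ((hf.mono (Set.Icc_subset_Icc haq hub)).sub continuousOn_id)
          (Set.mem_Icc.mpr ⟨by show f q - q ≤ 0; linarith,
            by show (0:ℝ) ≤ f u - u; linarith⟩)
        have hfw : f w = w := by have h0 : f w - w = 0 := hgw; linarith
        exact hmin w hw.1 (lt_of_le_of_lt hw.2 huv) (by rw [hfw]; exact hfw)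
    have hfua : a ≤ f u := (hmaps (Set.mem_Icc.mpr ⟨hau, hub⟩)).1
    obtain ⟨c, z, h3, h4, h5, hfc, hfz, hlt', hgt'⟩ := lemA hf hfua h2 hub h1.le h2
    have hzq : z < q := by
      by_contra hle
      push_neg at hle
      exact hmin z hle (h5.trans huv) (by rw [hfz]; exact hfz)
    linarith
  -- final contradiction
  have hqv2 : q < (q + v) / 2 := by linarith
  have hv2 : (q + v) / 2 < v := by linarith
  have hfu₀ : f ((q + v) / 2) < q := hkey _ hqv2 hv2
  obtain ⟨w, hw, hfw⟩ := intermediate_value_Icc hv2.le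
    (hf.mono (Set.Icc_subset_Icc (by linarith) (hvM.trans hMb)))
    (Set.mem_Icc.mpr ⟨hfu₀.le, by rw [hfv]; linarith⟩)
  have hwv : w < v := by
    rcases eq_or_lt_of_le hw.2 with h | h
    · exfalso; rw [h, hfv] at hfw; linarith
    · exact h
  have hcontra := hkey w (lt_of_lt_of_le hqv2 hw.1) hwv
  rw [hfw] at hcontra
  exact lt_irrefl q hcontra
end

section
/- If a continuous map f : I → I of a compact interval has a periodic point of least period 3, then for every positive integer n, f has a periodic point of least period n (period three implies all periods). -/
/-! Let `β` be the middle point of the orbit of period three, `K = [[β, f β]]` and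
`L = [[β, f (f β)]]`. By the intermediate value theorem `f '' K ⊇ K ∪ L` and `f '' L ⊇ K`, so
following the loop `K → ⋯ → K → L → K` of length `n` yields a fixed point `x` of `f^[n]` with
`f^[i] x ∈ K` for `i < n - 1` and `f^[n - 1] x ∈ L`. As `K ∩ L = {β}`, a shorter period would force
`f^[n - 1] x = β`, hence `x = f β` and `f x = f (f β) ∉ K`, against the itinerary (for `n = 2`,
against `f (f β) ≠ β`). -/

open Set Function

section LinearOrder

variable {α : Type*} [LinearOrder α]

theorem mem_uIcc_or_mem_uIcc_of_notMem_uIcc {p q z : α} (hz : z ∉ uIcc p q) :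
    p ∈ uIcc z q ∨ q ∈ uIcc p z := by
  simp only [mem_uIcc] at hz ⊢
  grind

theorem uIcc_inter_uIcc_subset_singleton {u v β : α} (hβ : β ∈ uIoo u v) :
    uIcc β u ∩ uIcc β v ⊆ {β} := by
  rintro x ⟨hu, hv⟩
  simp only [uIoo, mem_Ioo, mem_uIcc, inf_lt_iff, lt_sup_iff] at hβ hu hv
  rw [mem_singleton_iff]
  grind

theorem mem_uIoo_or_mem_uIoo_or_mem_uIoo {u v w : α} (huv : u ≠ v) (hvw : v ≠ w) (hwu : w ≠ u) :
    u ∈ uIoo v w ∨ v ∈ uIoo w u ∨ w ∈ uIoo u v := by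
  simp only [uIoo, mem_Ioo, inf_lt_iff, lt_sup_iff]
  grind

end LinearOrder

section ConditionallyCompleteLinearOrder

variable {α δ : Type*} [ConditionallyCompleteLinearOrder α] [TopologicalSpace α] [OrderTopology α]
  [DenselyOrdered α] [LinearOrder δ] [TopologicalSpace δ] [OrderClosedTopology δ]

/-- The interval is cut out between the last point of `[c, t]` where `g = g c` and the first point
`t` of `[c, d]` where `g = g d`. -/
theorem exists_uIcc_subset_image_eq_uIcc {g : α → δ} {c d : α} (hg : ContinuousOn g (uIcc c d)) :
    ∃ s t, uIcc s t ⊆ uIcc c d ∧ g '' uIcc s t = uIcc (g c) (g d) := by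
  wlog hcd : c ≤ d generalizing c d
  · obtain ⟨s, t, hsub, himg⟩ := this (uIcc_comm c d ▸ hg) (le_of_not_ge hcd)
    exact ⟨s, t, uIcc_comm d c ▸ hsub, uIcc_comm (g d) (g c) ▸ himg⟩
  rw [uIcc_of_le hcd] at hg ⊢
  set T := Icc c d ∩ g ⁻¹' {g d}
  have hT : IsClosed T := hg.preimage_isClosed_of_isClosed isClosed_Icc isClosed_singleton
  have ht : sInf T ∈ T := hT.csInf_mem ⟨d, right_mem_Icc.2 hcd, rfl⟩ ⟨c, fun x hx => hx.1.1⟩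
  set t := sInf T
  set S := Icc c t ∩ g ⁻¹' {g c}
  have hS : IsClosed S := (hg.mono (Icc_subset_Icc_right ht.1.2)).preimage_isClosed_of_isClosed
    isClosed_Icc isClosed_singleton
  have hSbdd : BddAbove S := ⟨t, fun x hx => hx.1.2⟩
  have hs : sSup S ∈ S := hS.csSup_mem ⟨c, left_mem_Icc.2 ht.1.1, rfl⟩ hSbdd
  set s := sSup S
  have hst : s ≤ t := hs.1.2
  have hgs : g s = g c := hs.2
  have hgt : g t = g d := ht.2
  have hsub : Icc s t ⊆ Icc c d := Icc_subset_Icc hs.1.1 ht.1.2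
  refine ⟨s, t, uIcc_of_le hst ▸ hsub, ?_⟩
  rw [uIcc_of_le hst]
  refine Subset.antisymm ?_ ?_
  · rintro _ ⟨x, hx, rfl⟩
    by_contra hgx
    rcases mem_uIcc_or_mem_uIcc_of_notMem_uIcc hgx with hc | hd
    · obtain ⟨y, hy, hgy⟩ := intermediate_value_uIcc
        (hg.mono (uIcc_of_le hx.2 ▸ Icc_subset_Icc (hs.1.1.trans hx.1) ht.1.2))
        (show g c ∈ uIcc (g x) (g t) from hgt ▸ hc)
      rw [uIcc_of_le hx.2] at hy
      have hys : y ≤ s := le_csSup hSbdd ⟨⟨hs.1.1.trans (hx.1.trans hy.1), hy.2⟩, hgy⟩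
      have hxs : x = s := le_antisymm (hy.1.trans hys) hx.1
      exact hgx (hxs ▸ hgs ▸ left_mem_uIcc)
    · obtain ⟨y, hy, hgy⟩ := intermediate_value_uIcc
        (hg.mono (uIcc_of_le hx.1 ▸ Icc_subset_Icc hs.1.1 (hx.2.trans ht.1.2)))
        (show g d ∈ uIcc (g s) (g x) from hgs ▸ hd)
      rw [uIcc_of_le hx.1] at hy
      have hty : t ≤ y := csInf_le ⟨c, fun z hz => hz.1.1⟩
        ⟨⟨hs.1.1.trans hy.1, hy.2.trans (hx.2.trans ht.1.2)⟩, hgy⟩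
      have hxt : x = t := le_antisymm hx.2 (hty.trans hy.2)
      exact hgx (hxt ▸ hgt ▸ right_mem_uIcc)
  · simpa only [hgs, hgt, uIcc_of_le hst] using
      intermediate_value_uIcc (hg.mono ((uIcc_of_le hst).trans_subset hsub))

theorem exists_uIcc_subset_image_eq_of_uIcc_subset_image {g : α → δ} {S : Set α}
    [hS : S.OrdConnected] (hg : ContinuousOn g S) {p q : δ} (h : uIcc p q ⊆ g '' S) :
    ∃ s t, uIcc s t ⊆ S ∧ g '' uIcc s t = uIcc p q := by
  obtain ⟨c, hc, rfl⟩ := h left_mem_uIcc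
  obtain ⟨d, hd, rfl⟩ := h right_mem_uIcc
  have hcd : uIcc c d ⊆ S := hS.uIcc_subset hc hd
  obtain ⟨s, t, hst, himg⟩ := exists_uIcc_subset_image_eq_uIcc (hg.mono hcd)
  exact ⟨s, t, hst.trans hcd, himg⟩

theorem exists_uIcc_itinerary {f : α → α} {p q : ℕ → α} {n : ℕ}
    (hf : ∀ i < n, ContinuousOn f (uIcc (p i) (q i)))
    (hcov : ∀ i < n, uIcc (p (i + 1)) (q (i + 1)) ⊆ f '' uIcc (p i) (q i)) :
    ∃ s t, (∀ i ≤ n, MapsTo f^[i] (uIcc s t) (uIcc (p i) (q i))) ∧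
      ContinuousOn f^[n] (uIcc s t) ∧ f^[n] '' uIcc s t = uIcc (p n) (q n) := by
  induction n generalizing p q with
  | zero =>
    refine ⟨p 0, q 0, fun i hi => ?_, continuousOn_id, image_id _⟩
    obtain rfl := Nat.le_zero.1 hi
    exact mapsTo_id _
  | succ n ih =>
    obtain ⟨s', t', hmaps, hcont, himg⟩ := ih (p := fun i => p (i + 1)) (q := fun i => q (i + 1))
      (fun i hi => hf (i + 1) (by omega)) (fun i hi => hcov (i + 1) (by omega))
    have hsub' : uIcc s' t' ⊆ uIcc (p 1) (q 1) := fun x hx => hmaps 0 n.zero_le hx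
    obtain ⟨s, t, hsub, hst⟩ := exists_uIcc_subset_image_eq_of_uIcc_subset_image
      (hf 0 n.succ_pos) (hsub'.trans (hcov 0 n.succ_pos))
    have hfst : MapsTo f (uIcc s t) (uIcc s' t') := hst ▸ mapsTo_image f _
    refine ⟨s, t, ?_, ?_, ?_⟩
    · rintro (_ | i) hi
      · exact fun x hx => hsub hx
      · rw [iterate_succ]
        exact (hmaps i (by omega)).comp hfst
    · rw [iterate_succ]
      exact hcont.comp ((hf 0 n.succ_pos).mono hsub) hfst
    · rw [iterate_succ, image_comp, hst, himg]

theorem exists_isPeriodicPt_of_uIcc_itinerary {f : α → α} {p q : ℕ → α} {n : ℕ}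
    (hf : ∀ i < n, ContinuousOn f (uIcc (p i) (q i)))
    (hcov : ∀ i < n, uIcc (p (i + 1)) (q (i + 1)) ⊆ f '' uIcc (p i) (q i))
    (hloop : uIcc (p 0) (q 0) ⊆ uIcc (p n) (q n)) :
    ∃ x, (∀ i ≤ n, f^[i] x ∈ uIcc (p i) (q i)) ∧ IsPeriodicPt f n x := by
  obtain ⟨s, t, hmaps, hcont, himg⟩ := exists_uIcc_itinerary hf hcov
  have hsurj : SurjOn f^[n] (uIcc s t) (uIcc s t) := by
    have hst : uIcc s t ⊆ uIcc (p 0) (q 0) := fun x hx => hmaps 0 n.zero_le hx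
    rw [SurjOn, himg]
    exact hst.trans hloop
  obtain ⟨x, hx, hfix⟩ := exists_mem_uIcc_isFixedPt_of_surjOn hcont hsurj
  exact ⟨x, fun i hi => hmaps i hi hx, hfix⟩

end ConditionallyCompleteLinearOrder

theorem isLeastPeriod_of_itinerary {f : ℝ → ℝ} {K L : Set ℝ} {β x : ℝ} {n : ℕ}
    (hKL : K ∩ L ⊆ {β}) (hβ : f (f β) ≠ β) (hK : f (f β) ∉ K) (hn : 2 ≤ n)
    (hx : IsPeriodicPt f n x) (hxK : ∀ i < n - 1, f^[i] x ∈ K) (hxL : f^[n - 1] x ∈ L) :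
    IsLeastPeriod f x n := by
  refine ⟨by omega, hx, fun k hk hkn hkx => ?_⟩
  have hxβ : f^[n - 1] x = β := by
    have hshift : f^[n - 1] x = f^[n - 1 - k] x := by
      calc f^[n - 1] x = f^[n - 1 - k] (f^[k] x) := by
            rw [← iterate_add_apply, Nat.sub_add_cancel (by omega)]
        _ = f^[n - 1 - k] x := by rw [hkx]
    exact hKL ⟨hshift ▸ hxK _ (by omega), hxL⟩
  have hfβ : f β = x := by
    rw [← hxβ, ← iterate_succ_apply' f, Nat.succ_eq_add_one, Nat.sub_add_cancel (by omega)]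
    exact hx
  rcases (show n = 2 ∨ 3 ≤ n by omega) with rfl | hn3
  · obtain rfl : k = 1 := by omega
    obtain rfl : x = β := hkx.symm.trans hxβ
    exact hβ (by rw [hfβ]; exact hkx)
  · exact hK (by rw [hfβ]; exact hxK 1 (by omega))

theorem exists_isLeastPeriod_of_mem_uIoo {f : ℝ → ℝ} {β : ℝ}
    (hf : ContinuousOn f (uIcc (f β) (f (f β)))) (h3 : f (f (f β)) = β)
    (hβ : β ∈ uIoo (f β) (f (f β))) {n : ℕ} (hn : 0 < n) :
    ∃ y ∈ uIcc (f β) (f (f β)), IsLeastPeriod f y n := by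
  have hβM : β ∈ uIcc (f β) (f (f β)) := uIoo_subset_uIcc_self hβ
  have hKM : uIcc β (f β) ⊆ uIcc (f β) (f (f β)) := uIcc_subset_uIcc hβM left_mem_uIcc
  have hLM : uIcc β (f (f β)) ⊆ uIcc (f β) (f (f β)) := uIcc_subset_uIcc hβM right_mem_uIcc
  have hMK : uIcc (f β) (f (f β)) ⊆ f '' uIcc β (f β) := intermediate_value_uIcc (hf.mono hKM)
  have hKL : uIcc β (f β) ⊆ f '' uIcc β (f (f β)) := by
    have := intermediate_value_uIcc (hf.mono hLM)
    rwa [h3, uIcc_comm] at this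
  have hinter := uIcc_inter_uIcc_subset_singleton hβ
  have hf2β : f (f β) ≠ β := fun h => by rw [h] at hβ; exact right_notMem_uIoo hβ
  rcases (show n = 1 ∨ 2 ≤ n by omega) with rfl | hn2
  · obtain ⟨y, hy, hfix⟩ := exists_mem_uIcc_isFixedPt_of_surjOn (hf.mono hKM) (hKM.trans hMK)
    exact ⟨y, hKM hy, one_pos, hfix, fun k hk hk1 => by omega⟩
  · set q : ℕ → ℝ := fun i => if i = n - 1 then f (f β) else f β
    have hcont : ∀ i < n, ContinuousOn f (uIcc β (q i)) := by
      intro i _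
      simp only [q]
      split_ifs
      exacts [hf.mono hLM, hf.mono hKM]
    have hcov : ∀ i < n, uIcc β (q (i + 1)) ⊆ f '' uIcc β (q i) := by
      intro i hi
      simp only [q]
      split_ifs <;> first | omega | exact hLM.trans hMK | exact hKL | exact hKM.trans hMK
    have hloop : uIcc β (q 0) ⊆ uIcc β (q n) := by
      simp only [q, if_neg (show 0 ≠ n - 1 by omega), if_neg (show n ≠ n - 1 by omega)]
      rfl
    obtain ⟨x, hit, hx⟩ := exists_isPeriodicPt_of_uIcc_itinerary (p := fun _ => β) hcont hcov hloop
    have hxK : ∀ i < n - 1, f^[i] x ∈ uIcc β (f β) := fun i hi => by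
      simpa [q, hi.ne] using hit i (by omega)
    have hxL : f^[n - 1] x ∈ uIcc β (f (f β)) := by simpa [q] using hit (n - 1) (by omega)
    have hK : f (f β) ∉ uIcc β (f β) := fun h => hf2β (hinter ⟨h, right_mem_uIcc⟩)
    exact ⟨x, hKM (hxK 0 (by omega)), isLeastPeriod_of_itinerary hinter hf2β hK hn2 hx hxK hxL⟩

theorem exists_mem_uIoo_of_isLeastPeriod_three {f : ℝ → ℝ} {x : ℝ} (hx : IsLeastPeriod f x 3) :
    ∃ β ∈ ({x, f x, f (f x)} : Set ℝ), f (f (f β)) = β ∧ β ∈ uIoo (f β) (f (f β)) := by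
  obtain ⟨-, h3, hlt⟩ := hx
  have h3 : f (f (f x)) = x := h3
  have h1 : f x ≠ x := hlt 1 one_pos (by norm_num)
  have h2 : f (f x) ≠ x := hlt 2 two_pos (by norm_num)
  have h12 : f (f x) ≠ f x := fun h => h1 <| calc
    f x = f (f (f x)) := by rw [h, h]
    _ = x := h3
  rcases mem_uIoo_or_mem_uIoo_or_mem_uIoo h1.symm h12.symm h2 with hmid | hmid | hmid
  · exact ⟨x, by simp, h3, hmid⟩
  · exact ⟨f x, by simp, by rw [h3], by rwa [h3]⟩
  · exact ⟨f (f x), by simp, by rw [h3], by rwa [h3]⟩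

theorem period_three_implies_all_general {a b : ℝ} (f : ℝ → ℝ)
    (hf : ContinuousOn f (Set.Icc a b)) (hmaps : Set.MapsTo f (Set.Icc a b) (Set.Icc a b))
    (h : ∃ x ∈ Set.Icc a b, IsLeastPeriod f x 3) :
    ∀ n : ℕ, 0 < n → ∃ y ∈ Set.Icc a b, IsLeastPeriod f y n := by
  obtain ⟨x, hx, hx3⟩ := h
  obtain ⟨β, hβ, h3, hmid⟩ := exists_mem_uIoo_of_isLeastPeriod_three hx3
  have hβab : β ∈ Icc a b := by
    rcases hβ with rfl | rfl | rfl
    exacts [hx, hmaps hx, hmaps (hmaps hx)]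
  have horbit : uIcc (f β) (f (f β)) ⊆ Icc a b := uIcc_subset_Icc (hmaps hβab) (hmaps (hmaps hβab))
  intro n hn
  obtain ⟨y, hy, hper⟩ := exists_isLeastPeriod_of_mem_uIoo (hf.mono horbit) h3 hmid hn
  exact ⟨y, horbit hy, hper⟩

/-- Period three implies all periods: if a continuous self-map of a compact
interval has a periodic point of least period `3`, then for every positive integer `n`
it has a periodic point of least period `n`. -/
theorem period_three_implies_all {a b : ℝ} (hab : a ≤ b) (f : ℝ → ℝ)
    (hf : ContinuousOn f (Set.Icc a b)) (hmaps : Set.MapsTo f (Set.Icc a b) (Set.Icc a b))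
    (h : ∃ x ∈ Set.Icc a b, IsLeastPeriod f x 3) :
    ∀ n : ℕ, 0 < n → ∃ y ∈ Set.Icc a b, IsLeastPeriod f y n :=
  period_three_implies_all_general f hf hmaps h
end

section
/- If a continuous map f : I → I of a compact interval has a periodic point of least period 2^k for some k ≥ 2, then f has a periodic point of least period 2^{k-1}. -/
open Set Function Filter Topology

theorem Finset.exists_lt_le_apply_and_apply_le {α : Type*} [LinearOrder α] {g : α → α}
    {S : Finset α} (hS : S.Nonempty) (hmaps : ∀ u ∈ S, g u ∈ S)
    (hfix : ∀ u ∈ S, g u ≠ u) :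
    ∃ p ∈ S, ∃ q ∈ S, p < q ∧ q ≤ g p ∧ g q ≤ p := by
  classical
  set up := S.filter fun u => u < g u
  have hmS := S.min'_mem hS
  have hup : up.Nonempty := ⟨S.min' hS, Finset.mem_filter.2
    ⟨hmS, (S.min'_le _ (hmaps _ hmS)).lt_of_ne (hfix _ hmS).symm⟩⟩
  set p := up.max' hup
  obtain ⟨hpS, hpg⟩ := Finset.mem_filter.1 (up.max'_mem hup)
  set above := S.filter fun u => p < u
  have habove : above.Nonempty := ⟨g p, Finset.mem_filter.2 ⟨hmaps p hpS, hpg⟩⟩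
  set q := above.min' habove
  obtain ⟨hqS, hpq⟩ := Finset.mem_filter.1 (above.min'_mem habove)
  have hgq : g q < q := (not_lt.1 fun h => hpq.not_ge
    (up.le_max' q (Finset.mem_filter.2 ⟨hqS, h⟩))).lt_of_ne (hfix q hqS)
  refine ⟨p, hpS, q, hqS, hpq, above.min'_le _ (Finset.mem_filter.2 ⟨hmaps p hpS, hpg⟩), ?_⟩
  exact not_lt.1 fun h => hgq.not_ge (above.min'_le _ (Finset.mem_filter.2 ⟨hmaps q hqS, h⟩))

theorem exists_last_zero_Icc {α : Type*} [ConditionallyCompleteLinearOrder α]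
    [TopologicalSpace α] [OrderTopology α] [DenselyOrdered α] {φ : α → ℝ} {s u : α}
    (hsu : s ≤ u) (hφ : ContinuousOn φ (Icc s u)) (hs : 0 ≤ φ s) (hu : φ u ≤ 0) :
    ∃ c ∈ Icc s u, φ c = 0 ∧ ∀ t ∈ Ioc c u, φ t < 0 := by
  have hK : IsCompact (Icc s u ∩ φ ⁻¹' Ici 0) := isCompact_Icc.of_isClosed_subset
    (hφ.preimage_isClosed_of_isClosed isClosed_Icc isClosed_Ici) inter_subset_left
  obtain ⟨c, ⟨hcI, hc⟩, hmax⟩ :=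
    hK.exists_isGreatest ⟨s, ⟨le_rfl, hsu⟩, (hs : φ s ∈ Ici 0)⟩
  have hneg : ∀ t ∈ Ioc c u, φ t < 0 := fun t ht =>
    not_le.1 fun h => (ht.1.trans_le (hmax ⟨⟨hcI.1.trans ht.1.le, ht.2⟩, h⟩)).false
  refine ⟨c, hcI, le_antisymm ?_ hc, hneg⟩
  obtain ⟨t, ht, hφt⟩ :=
    intermediate_value_Icc' hcI.2 (hφ.mono (Icc_subset_Icc_left hcI.1)) ⟨hu, hc⟩
  rcases ht.1.eq_or_lt with rfl | hct
  · exact hφt.le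
  · exact absurd hφt (hneg t ⟨hct, ht.2⟩).ne

section IntervalMap

variable {g : ℝ → ℝ}

theorem exists_mem_Ioc_le_apply_apply {c w : ℝ} (hcw : c ≤ w)
    (hg : ContinuousOn g (Icc c w)) (hc : g c = c) (hw : w < g w) :
    ∃ t ∈ Ioc c w, t ≤ g (g t) := by
  obtain ⟨e, he, hge, hlt⟩ := exists_last_zero_Icc (φ := fun t => t - g t) hcw
    (continuousOn_id.sub hg) (by rw [hc, sub_self]) (by show w - g w ≤ 0; linarith)
  simp only [sub_eq_zero, sub_neg] at hge hlt
  have hew : e < w := he.2.lt_of_ne fun h => by subst h; linarith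
  have hcont : Tendsto g (𝓝[>] e) (𝓝 e) := by
    have := (hg e he).mono (Ioc_subset_Icc_self.trans (Icc_subset_Icc_left he.1))
    rwa [ContinuousWithinAt, nhdsWithin_Ioc_eq_nhdsGT hew, ← hge] at this
  obtain ⟨t, ht, hgt⟩ :=
    (Eventually.and (Ioc_mem_nhdsGT hew) (hcont.eventually (gt_mem_nhds hew))).exists
  have hgt_mem : g t ∈ Ioc e w := ⟨ht.1.trans (hlt t ht), hgt.le⟩
  exact ⟨t, ⟨he.1.trans_lt ht.1, ht.2⟩, ((hlt t ht).trans (hlt _ hgt_mem)).le⟩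

variable {a b : ℝ}

theorem exists_minimalPeriod_eq_two_of_lt_of_apply_apply_le (hg : ContinuousOn g (Icc a b))
    (hmaps : MapsTo g (Icc a b) (Icc a b)) {w : ℝ} (hw : w ∈ Icc a b) (hlt : w < g w)
    (hle : g (g w) ≤ w) :
    ∃ y ∈ Icc a b, minimalPeriod g y = 2 := by
  have hsub : Icc a w ⊆ Icc a b := Icc_subset_Icc_right hw.2
  obtain ⟨c, hc, hgc, hneg⟩ := exists_last_zero_Icc (φ := fun t => g (g t) - t) hw.1
    (((hg.comp hg hmaps).mono hsub).sub continuousOn_id)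
    (sub_nonneg.2 (hmaps (hmaps ⟨le_rfl, hw.1.trans hw.2⟩)).1) (sub_nonpos.2 hle)
  simp only [sub_eq_zero, sub_neg] at hgc hneg
  refine ⟨c, hsub hc, minimalPeriod_eq_prime hgc fun hfix => ?_⟩
  obtain ⟨t, ht, hle'⟩ := exists_mem_Ioc_le_apply_apply hc.2
    (hg.mono ((Icc_subset_Icc_left hc.1).trans hsub)) hfix hlt
  exact (hneg t ht).not_ge hle'

theorem exists_minimalPeriod_eq_two_of_le_apply_of_apply_le (hg : ContinuousOn g (Icc a b))
    (hmaps : MapsTo g (Icc a b) (Icc a b)) {p q : ℝ} (hp : p ∈ Icc a b) (hq : q ∈ Icc a b)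
    (hpq : p < q) (hgp : q ≤ g p) (hgq : g q ≤ p) :
    ∃ y ∈ Icc a b, minimalPeriod g y = 2 := by
  have hsub : Icc p q ⊆ Icc a b := Icc_subset_Icc hp.1 hq.2
  obtain ⟨w, hw, hgw⟩ :=
    intermediate_value_Icc' hpq.le (hg.mono hsub) ⟨hgq.trans hpq.le, hgp⟩
  have hwq : w < q := hw.2.lt_of_ne fun h => by subst h; linarith
  exact exists_minimalPeriod_eq_two_of_lt_of_apply_apply_le hg hmaps (hsub hw)
    (hgw ▸ hwq) (by rw [hgw]; exact hgq.trans hw.1)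

theorem exists_minimalPeriod_eq_two_of_mem_periodicPts (hg : ContinuousOn g (Icc a b))
    (hmaps : MapsTo g (Icc a b) (Icc a b)) {x : ℝ} (hx : x ∈ Icc a b)
    (hper : x ∈ periodicPts g) (hfix : ¬IsFixedPt g x) :
    ∃ y ∈ Icc a b, minimalPeriod g y = 2 := by
  set orbit := (Finset.range (minimalPeriod g x)).image fun n => g^[n] x
  have hmem : ∀ {u}, u ∈ orbit ↔ ∃ n, g^[n] x = u := by
    intro u
    rw [← mem_periodicOrbit_iff hper]
    simp [orbit, periodicOrbit, eq_comm]
  obtain ⟨p, hp, q, hq, hpq, hgp, hgq⟩ := Finset.exists_lt_le_apply_and_apply_le (g := g)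
    ⟨x, hmem.2 ⟨0, rfl⟩⟩
    (fun u hu => by
      obtain ⟨n, rfl⟩ := hmem.1 hu
      exact hmem.2 ⟨n + 1, iterate_succ_apply' g n x⟩)
    (fun u hu hgu => hfix <| by
      obtain ⟨n, rfl⟩ := hmem.1 hu
      rw [← minimalPeriod_eq_one_iff_isFixedPt, ← minimalPeriod_apply_iterate hper n]
      exact minimalPeriod_eq_one_iff_isFixedPt.2 hgu)
  have hIcc : ∀ u ∈ orbit, u ∈ Icc a b := fun u hu => by
    obtain ⟨n, rfl⟩ := hmem.1 hu
    exact hmaps.iterate n hx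
  exact exists_minimalPeriod_eq_two_of_le_apply_of_apply_le hg hmaps (hIcc p hp) (hIcc q hq)
    hpq hgp hgq

end IntervalMap

theorem minimalPeriod_eq_pow_succ_of_minimalPeriod_iterate_pow {α : Type*} {f : α → α} {y : α}
    {p j : ℕ} [Fact p.Prime] (h : minimalPeriod f^[p ^ j] y = p) :
    minimalPeriod f y = p ^ (j + 1) := by
  refine minimalPeriod_eq_prime_pow (fun hfix => ?_) ?_
  · have := minimalPeriod_eq_one_iff_isFixedPt.2 (hfix : IsFixedPt f^[p ^ j] y)
    exact (Fact.out : p.Prime).one_lt.ne' (h ▸ this)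
  · have : IsPeriodicPt f^[p ^ j] p y := by
      simpa only [h] using isPeriodicPt_minimalPeriod f^[p ^ j] y
    rwa [pow_succ, IsPeriodicPt, iterate_mul]

theorem isLeastPeriod_of_minimalPeriod_eq {f : ℝ → ℝ} {x : ℝ} {m : ℕ} (hm : 0 < m)
    (h : minimalPeriod f x = m) : IsLeastPeriod f x m := by
  subst h
  exact ⟨hm, iterate_minimalPeriod, fun k hk hlt =>
    not_isPeriodicPt_of_pos_of_lt_minimalPeriod hk.ne' hlt⟩

theorem period_halving_general {a b : ℝ} (f : ℝ → ℝ)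
    (hf : ContinuousOn f (Set.Icc a b)) (hmaps : Set.MapsTo f (Set.Icc a b) (Set.Icc a b))
    (k : ℕ) (hk : 2 ≤ k) (h : ∃ x ∈ Set.Icc a b, IsLeastPeriod f x (2 ^ k)) :
    ∃ y ∈ Set.Icc a b, IsLeastPeriod f y (2 ^ (k - 1)) := by
  obtain ⟨j, rfl⟩ : ∃ j, k = j + 2 := ⟨k - 2, by omega⟩
  obtain ⟨x, hx, hpos, hper, hmin⟩ := h
  have hx_per : x ∈ periodicPts f^[2 ^ j] :=
    mk_mem_periodicPts hpos (IsPeriodicPt.iterate hper _)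
  have hx_fix : ¬IsFixedPt f^[2 ^ j] x :=
    hmin _ (by positivity) (Nat.pow_lt_pow_right (by norm_num) (by omega))
  obtain ⟨y, hy, hy2⟩ := exists_minimalPeriod_eq_two_of_mem_periodicPts (hf.iterate hmaps _)
    (hmaps.iterate _) hx hx_per hx_fix
  rw [show j + 2 - 1 = j + 1 by omega]
  exact ⟨y, hy, isLeastPeriod_of_minimalPeriod_eq (by positivity)
    (minimalPeriod_eq_pow_succ_of_minimalPeriod_iterate_pow hy2)⟩

/-- If a continuous self-map of a compact interval has a periodic point of
least period `2^k` for some `k ≥ 2`, then it has a periodic point of least period `2^(k-1)`. -/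
theorem period_halving {a b : ℝ} (hab : a ≤ b) (f : ℝ → ℝ)
    (hf : ContinuousOn f (Set.Icc a b)) (hmaps : Set.MapsTo f (Set.Icc a b) (Set.Icc a b))
    (k : ℕ) (hk : 2 ≤ k) (h : ∃ x ∈ Set.Icc a b, IsLeastPeriod f x (2 ^ k)) :
    ∃ y ∈ Set.Icc a b, IsLeastPeriod f y (2 ^ (k - 1)) :=
  period_halving_general f hf hmaps k hk h
end

section
/- If a continuous map f : I → I of a compact interval has a periodic point of least period 2^i · m with m ≥ 3 odd and i ≥ 0, then f has a periodic point of least period 2^{ℓ+1} for every ℓ ≥ i. -/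
open Set Function

theorem exists_eq_zero_forall_Ioc_neg {φ : ℝ → ℝ} {l r : ℝ} (hlr : l ≤ r)
    (hφ : ContinuousOn φ (Icc l r)) (hl : 0 ≤ φ l) (hr : φ r < 0) :
    ∃ c ∈ Icc l r, φ c = 0 ∧ ∀ t ∈ Ioc c r, φ t < 0 := by
  have hZ : IsCompact (Icc l r ∩ φ ⁻¹' {0}) :=
    isCompact_Icc.of_isClosed_subset
      (hφ.preimage_isClosed_of_isClosed isClosed_Icc isClosed_singleton) inter_subset_left
  obtain ⟨c, ⟨hc, hc0⟩, hcmax⟩ :=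
    hZ.exists_isGreatest (intermediate_value_Icc' hlr hφ ⟨hr.le, hl⟩)
  refine ⟨c, hc, hc0, fun t ht => lt_of_not_ge fun ht0 => ?_⟩
  obtain ⟨s, hs, hs0⟩ :=
    intermediate_value_Icc' ht.2 (hφ.mono (Icc_subset_Icc (hc.1.trans ht.1.le) le_rfl)) ⟨hr.le, ht0⟩
  exact (ht.1.trans_le hs.1).not_ge (hcmax ⟨⟨hc.1.trans (ht.1.le.trans hs.1), hs.2⟩, hs0⟩)

section NoPeriodTwo

variable {a b : ℝ} {f : ℝ → ℝ}

theorem lt_apply_apply_of_lt_apply (hf : ContinuousOn f (Icc a b))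
    (hmaps : MapsTo f (Icc a b) (Icc a b)) (hfix2 : ∀ z ∈ Icc a b, f (f z) = z → f z = z)
    {x : ℝ} (hx : x ∈ Icc a b) (hfx : x < f x) : x < f (f x) := by
  by_contra! hle
  have hffx : f (f x) < x := hle.lt_of_ne fun h => hfx.ne' (hfix2 x hx h)
  have ha : a ∈ Icc a b := ⟨le_rfl, hx.1.trans hx.2⟩
  have hsub : Icc a x ⊆ Icc a b := Icc_subset_Icc_right hx.2
  obtain ⟨l, hl, hl0, hneg⟩ := exists_eq_zero_forall_Ioc_neg (φ := fun t => f (f t) - t) hx.1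
    (((hf.comp hf hmaps).sub continuousOn_id).mono hsub)
    (sub_nonneg.2 (hmaps (hmaps ha)).1) (sub_neg.2 hffx)
  have hfl : f l = l := hfix2 l (hsub hl) (sub_eq_zero.1 hl0)
  obtain ⟨t, ht, hft⟩ :=
    intermediate_value_Icc hl.2 (hf.mono (hsub.trans' (Icc_subset_Icc_left hl.1)))
      ⟨hfl.symm ▸ hl.2, hfx.le⟩
  have hlt : l < t := ht.1.lt_of_ne fun hlt => by
    have hlx : l = x := hfl.symm.trans (hlt ▸ hft)
    exact hffx.ne (by rw [← hlx, hfl, hfl])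
  have := hneg t ⟨hlt, ht.2⟩
  simp only [hft] at this
  linarith [ht.2]

theorem lt_apply_of_lt_of_le_apply (hf : ContinuousOn f (Icc a b))
    (hmaps : MapsTo f (Icc a b) (Icc a b)) (hfix2 : ∀ z ∈ Icc a b, f (f z) = z → f z = z)
    {p q : ℝ} (hp : p ∈ Icc a b) (hq : q ∈ Icc a b) (hpq : p < q) (hfp : q ≤ f p) : p < f q := by
  by_contra! hfq
  obtain ⟨y, hy, hfy⟩ :=
    intermediate_value_Icc' hpq.le (hf.mono (Icc_subset_Icc hp.1 hq.2)) ⟨hfq.trans hpq.le, hfp⟩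
  have hyq : y < q := hy.2.lt_of_ne fun h => by subst h; linarith
  have := lt_apply_apply_of_lt_apply hf hmaps hfix2 ⟨hp.1.trans hy.1, hy.2.trans hq.2⟩ (hfy ▸ hyq)
  rw [hfy] at this
  linarith [hy.1]

end NoPeriodTwo

theorem Finset.exists_lt_le_apply_apply_le {α : Type*} [LinearOrder α] {s : Finset α}
    (hs : s.Nonempty) {f : α → α} (hmaps : ∀ x ∈ s, f x ∈ s) (hfix : ∀ x ∈ s, f x ≠ x) :
    ∃ p ∈ s, ∃ q ∈ s, p < q ∧ q ≤ f p ∧ f q ≤ p := by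
  set up := s.filter fun x => x < f x
  have hmin : s.min' hs ∈ up := Finset.mem_filter.2 ⟨s.min'_mem hs,
    (s.min'_le _ (hmaps _ (s.min'_mem hs))).lt_of_ne (hfix _ (s.min'_mem hs)).symm⟩
  set p := up.max' ⟨_, hmin⟩
  obtain ⟨hp, hpf⟩ := Finset.mem_filter.1 (up.max'_mem ⟨_, hmin⟩)
  set above := s.filter fun x => p < x
  have hfp : f p ∈ above := Finset.mem_filter.2 ⟨hmaps p hp, hpf⟩
  obtain ⟨hq, hpq⟩ := Finset.mem_filter.1 (above.min'_mem ⟨_, hfp⟩)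
  set q := above.min' ⟨_, hfp⟩
  refine ⟨p, hp, q, hq, hpq, above.min'_le _ hfp, not_lt.1 fun hfq => ?_⟩
  have hqf : f q < q := lt_of_le_of_ne
    (not_lt.1 fun h => hpq.not_ge (up.le_max' q (Finset.mem_filter.2 ⟨hq, h⟩))) (hfix q hq)
  exact hqf.not_ge (above.min'_le _ (Finset.mem_filter.2 ⟨hmaps q hq, hfq⟩))

theorem exists_apply_apply_eq_ne_of_isPeriodicPt {a b : ℝ} {f : ℝ → ℝ}
    (hf : ContinuousOn f (Icc a b)) (hmaps : MapsTo f (Icc a b) (Icc a b))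
    {x : ℝ} (hx : x ∈ Icc a b) {n : ℕ} (hn : 0 < n) (hper : IsPeriodicPt f n x) (hfx : f x ≠ x) :
    ∃ y ∈ Icc a b, f (f y) = y ∧ f y ≠ y := by
  by_contra! hfix2
  set orbit := (Finset.range n).image (f^[·] x)
  have hmem (k : ℕ) : f^[k] x ∈ orbit :=
    Finset.mem_image.2 ⟨k % n, Finset.mem_range.2 (k.mod_lt hn), hper.iterate_mod_apply k⟩
  have hmaps_orbit : ∀ y ∈ orbit, f y ∈ orbit := by
    simp only [orbit, Finset.forall_mem_image]
    intro k _
    simpa only [iterate_succ_apply'] using hmem (k + 1)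
  have hfix_orbit : ∀ y ∈ orbit, f y ≠ y := by
    simp only [orbit, Finset.forall_mem_image]
    intro k _ hfix
    have hback : f^[n * k - k] (f^[k] x) = x := by
      rw [← iterate_add_apply, Nat.sub_add_cancel (Nat.le_mul_of_pos_left k hn)]
      exact hper.mul_const k
    rw [iterate_fixed hfix] at hback
    exact hfx (hback ▸ hfix)
  obtain ⟨p, hp, q, hq, hpq, hfp, hfq⟩ :=
    Finset.exists_lt_le_apply_apply_le ⟨x, hmem 0⟩ hmaps_orbit hfix_orbit
  have hsub : ∀ y ∈ orbit, y ∈ Icc a b := by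
    simp only [orbit, Finset.forall_mem_image]
    exact fun k _ => hmaps.iterate k hx
  exact hfq.not_gt (lt_apply_of_lt_of_le_apply hf hmaps hfix2 (hsub p hp) (hsub q hq) hpq hfp)

theorem isLeastPeriod_iff {f : ℝ → ℝ} {x : ℝ} {n : ℕ} :
    IsLeastPeriod f x n ↔ 0 < n ∧ minimalPeriod f x = n := by
  constructor
  · rintro ⟨hn, hper, hleast⟩
    refine ⟨hn, (IsPeriodicPt.minimalPeriod_le hn hper).antisymm (not_lt.1 fun hlt => ?_)⟩
    exact hleast _ (IsPeriodicPt.minimalPeriod_pos hn hper) hlt iterate_minimalPeriod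
  · rintro ⟨hn, rfl⟩
    exact ⟨hn, iterate_minimalPeriod, fun k hk hlt =>
      not_isPeriodicPt_of_pos_of_lt_minimalPeriod hk.ne' hlt⟩

theorem powers_of_two_periods_general {a b : ℝ} (f : ℝ → ℝ)
    (hf : ContinuousOn f (Set.Icc a b)) (hmaps : Set.MapsTo f (Set.Icc a b) (Set.Icc a b))
    (i m : ℕ) (hm : 3 ≤ m) (hodd : Odd m)
    (h : ∃ x ∈ Set.Icc a b, IsLeastPeriod f x (2 ^ i * m)) :
    ∀ ℓ : ℕ, i ≤ ℓ → ∃ y ∈ Set.Icc a b, IsLeastPeriod f y (2 ^ (ℓ + 1)) := by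
  intro ℓ hℓ
  obtain ⟨x, hx, hxper⟩ := h
  obtain ⟨-, hmin⟩ := isLeastPeriod_iff.1 hxper
  have hper : IsPeriodicPt f^[2 ^ ℓ] m x := by
    have hper' : IsPeriodicPt f (2 ^ ℓ * m) x :=
      isPeriodicPt_iff_minimalPeriod_dvd.2 (hmin ▸ mul_dvd_mul_right (pow_dvd_pow 2 hℓ) m)
    rwa [IsPeriodicPt, IsFixedPt, iterate_mul] at hper'
  have hnotfix : f^[2 ^ ℓ] x ≠ x := fun hfix => by
    have hdvd : 2 ^ i * m ∣ 2 ^ ℓ := hmin ▸ IsPeriodicPt.minimalPeriod_dvd hfix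
    have : m = 1 :=
      (hodd.coprime_two_right.pow_right ℓ).eq_one_of_dvd (dvd_of_mul_left_dvd hdvd)
    omega
  obtain ⟨y, hy, hy2, hy1⟩ := exists_apply_apply_eq_ne_of_isPeriodicPt (hf.iterate hmaps _)
    (hmaps.iterate _) hx (by omega) hper hnotfix
  refine ⟨y, hy, isLeastPeriod_iff.2 ⟨by positivity, minimalPeriod_eq_prime_pow hy1 ?_⟩⟩
  show f^[2 ^ (ℓ + 1)] y = y
  rw [pow_succ, iterate_mul]
  exact hy2

/-- If a continuous self-map of a compact interval has a periodic point of
least period `2^i * m` with `m ≥ 3` odd and `i ≥ 0`, then it has a periodic point of least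
period `2^(ℓ+1)` for every `ℓ ≥ i`. -/
theorem powers_of_two_periods {a b : ℝ} (hab : a ≤ b) (f : ℝ → ℝ)
    (hf : ContinuousOn f (Set.Icc a b)) (hmaps : Set.MapsTo f (Set.Icc a b) (Set.Icc a b))
    (i m : ℕ) (hm : 3 ≤ m) (hodd : Odd m)
    (h : ∃ x ∈ Set.Icc a b, IsLeastPeriod f x (2 ^ i * m)) :
    ∀ ℓ : ℕ, i ≤ ℓ → ∃ y ∈ Set.Icc a b, IsLeastPeriod f y (2 ^ (ℓ + 1)) :=
  powers_of_two_periods_general f hf hmaps i m hm hodd h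
end

section
/- Let f : [0,1] → [0,1] be continuous, increasing on [0,1/2] and decreasing on [1/2,1]. If P and Q are periodic orbits of f of least periods ≥ 2 and max P < max Q, then [min P, max P] ⊆ [min Q, max Q] (periodic orbits of unimodal maps are nested). -/
/-- Key lemma: for a periodic orbit of least period `≥ 2` of a unimodal map,
the maximum of the orbit lies in `[1/2, 1]` and maps to the minimum. -/
lemma unimodal_orbit_key (f : ℝ → ℝ)
    (hmaps : Set.MapsTo f (Set.Icc (0:ℝ) 1) (Set.Icc (0:ℝ) 1))
    (hinc : MonotoneOn f (Set.Icc (0:ℝ) (1/2)))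
    (hdec : AntitoneOn f (Set.Icc ((1:ℝ)/2) 1))
    (y : ℝ) (hy : y ∈ Set.Icc (0:ℝ) 1) (k : ℕ) (hk : 2 ≤ k)
    (hpy : IsLeastPeriod f y k) (Q : Set ℝ)
    (hQ : Q = (fun j : ℕ => f^[j] y) '' Set.Iio k) :
    sSup Q ∈ Set.Icc ((1:ℝ)/2) 1 ∧ f (sSup Q) = sInf Q := by
  obtain ⟨hkpos, hper, hleast⟩ := hpy
  have hkpos' : 0 < k := by omega
  -- orbit stays in [0,1]
  have horb : ∀ j : ℕ, f^[j] y ∈ Set.Icc (0:ℝ) 1 := by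
    intro j
    induction j with
    | zero => simpa using hy
    | succ m ih => rw [Function.iterate_succ_apply']; exact hmaps ih
  -- every iterate is in Q
  have hmem : ∀ j : ℕ, f^[j] y ∈ Q := by
    intro j
    induction j using Nat.strong_induction_on with
    | _ j ih =>
      by_cases hj : j < k
      · rw [hQ]; exact ⟨j, hj, rfl⟩
      · push_neg at hj
        have h1 : f^[j] y = f^[j - k] y := by
          have h2 : f^[j] y = f^[j - k] (f^[k] y) := by
            rw [← Function.iterate_add_apply]
            congr 1; omega
          rw [h2, hper]
        rw [h1]
        exact ih (j - k) (by omega)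
  have finQ : Q.Finite := by
    rw [hQ]; exact (Set.finite_Iio k).image _
  have neQ : Q.Nonempty := ⟨y, by simpa using hmem 0⟩
  have hQsub : Q ⊆ Set.Icc (0:ℝ) 1 := by
    rw [hQ]
    rintro z ⟨j, -, rfl⟩
    exact horb j
  set β := sSup Q with hβ
  set α := sInf Q with hα
  have hβQ : β ∈ Q := neQ.csSup_mem finQ
  have hαQ : α ∈ Q := neQ.csInf_mem finQ
  have hleβ : ∀ z ∈ Q, z ≤ β := fun z hz => le_csSup finQ.bddAbove hz
  have hgeα : ∀ z ∈ Q, α ≤ z := fun z hz => csInf_le finQ.bddBelow hz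
  -- get a preimage of α in Q
  obtain ⟨j, hj, hjα⟩ : ∃ j, j < k ∧ f^[j] y = α := by
    rw [hQ] at hαQ
    obtain ⟨j, hj, hjα⟩ := hαQ
    exact ⟨j, hj, hjα⟩
  obtain ⟨w, hwQ, hfw⟩ : ∃ w ∈ Q, f w = α := by
    rcases Nat.eq_zero_or_pos j with h0 | hpos
    · refine ⟨f^[k - 1] y, hmem _, ?_⟩
      have h2 : f (f^[k - 1] y) = f^[k - 1 + 1] y := (Function.iterate_succ_apply' f _ y).symm
      have h3 : k - 1 + 1 = k := by omega
      rw [h2, h3, hper, ← hjα, h0]; simp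
    · refine ⟨f^[j - 1] y, hmem _, ?_⟩
      have h2 : f (f^[j - 1] y) = f^[j - 1 + 1] y := (Function.iterate_succ_apply' f _ y).symm
      have h3 : j - 1 + 1 = j := by omega
      rw [h2, h3, hjα]
  -- w must be ≥ 1/2
  have hw2 : (1:ℝ)/2 ≤ w := by
    by_contra hlt
    push_neg at hlt
    have hαw : α ≤ w := hgeα w hwQ
    have hαmem : α ∈ Set.Icc (0:ℝ) (1/2) := ⟨(hQsub hαQ).1, le_of_lt (lt_of_le_of_lt hαw hlt)⟩
    have hwmem : w ∈ Set.Icc (0:ℝ) (1/2) := ⟨(hQsub hwQ).1, hlt.le⟩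
    have hfα : f α ≤ α := by
      calc f α ≤ f w := hinc hαmem hwmem hαw
        _ = α := hfw
    have hfαQ : f α ∈ Q := by
      have : f α = f^[j + 1] y := by rw [Function.iterate_succ_apply', hjα]
      rw [this]; exact hmem _
    have hfix : f α = α := le_antisymm hfα (hgeα _ hfαQ)
    -- then y = α is a fixed point, contradicting least period ≥ 2
    have hyα : y = α := by
      have h1 : f^[k - j] α = α := Function.iterate_fixed hfix _
      have h2 : f^[k] y = f^[k - j] (f^[j] y) := by
        rw [← Function.iterate_add_apply]
        congr 1; omega
      rw [hper, hjα, h1] at h2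
      exact h2
    have : f^[1] y = y := by
      simp only [Function.iterate_one]
      rw [hyα, hfix]
    exact hleast 1 one_pos (by omega) this
  have hwβ : w ≤ β := hleβ w hwQ
  have hβmem : β ∈ Set.Icc ((1:ℝ)/2) 1 := ⟨hw2.trans hwβ, (hQsub hβQ).2⟩
  refine ⟨hβmem, ?_⟩
  have hwmem : w ∈ Set.Icc ((1:ℝ)/2) 1 := ⟨hw2, (hQsub hwQ).2⟩
  have h1 : f β ≤ α := by
    calc f β ≤ f w := hdec hwmem hβmem hwβ
      _ = α := hfw
  have hfβQ : f β ∈ Q := by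
    rw [hQ] at hβQ
    obtain ⟨jb, hjb, hjβ⟩ := hβQ
    have hjβ' : f^[jb] y = β := hjβ
    have : f β = f^[jb + 1] y := by rw [Function.iterate_succ_apply', hjβ']
    rw [this]; exact hmem _
  exact le_antisymm h1 (hgeα _ hfβQ)

/-- Periodic orbits of a continuous unimodal map of `[0,1]` of least periods
`≥ 2` are nested: if `max P < max Q` then `[min P, max P] ⊆ [min Q, max Q]`. -/
theorem unimodal_orbits_nested (f : ℝ → ℝ)
    (hf : ContinuousOn f (Set.Icc (0:ℝ) 1))
    (hmaps : Set.MapsTo f (Set.Icc (0:ℝ) 1) (Set.Icc (0:ℝ) 1))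
    (hinc : MonotoneOn f (Set.Icc (0:ℝ) (1/2)))
    (hdec : AntitoneOn f (Set.Icc ((1:ℝ)/2) 1))
    (x y : ℝ) (hx : x ∈ Set.Icc (0:ℝ) 1) (hy : y ∈ Set.Icc (0:ℝ) 1)
    (n k : ℕ) (hn : 2 ≤ n) (hk : 2 ≤ k)
    (hpx : IsLeastPeriod f x n) (hpy : IsLeastPeriod f y k)
    (P Q : Set ℝ)
    (hP : P = (fun j : ℕ => f^[j] x) '' Set.Iio n)
    (hQ : Q = (fun j : ℕ => f^[j] y) '' Set.Iio k)
    (hmax : sSup P < sSup Q) :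
    Set.Icc (sInf P) (sSup P) ⊆ Set.Icc (sInf Q) (sSup Q) := by
  obtain ⟨hPmem, hPf⟩ :=
    unimodal_orbit_key f hmaps hinc hdec x hx n hn hpx P hP
  obtain ⟨hQmem, hQf⟩ :=
    unimodal_orbit_key f hmaps hinc hdec y hy k hk hpy Q hQ
  have h1 : sInf Q ≤ sInf P := by
    rw [← hPf, ← hQf]
    exact hdec hPmem hQmem hmax.le
  exact Set.Icc_subset_Icc h1 hmax.le
end

section
/- Let f : I → I be continuous on a compact interval and suppose P is a periodic orbit of f of odd least period m ≥ 3. Let e = f^{m-1}(min P). Then there exists a point v with min P ≤ v < e such that f(v) = e, and f has a fixed point z in the open interval (v, e). -/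
/-- If a continuous self-map of a compact interval has a periodic orbit `P` of
odd least period `m ≥ 3` and `e = f^[m-1] (min P)`, then there is a point `v` with
`min P ≤ v < e` and `f v = e`, and `f` has a fixed point `z` in `(v, e)`. -/
theorem exists_v_and_fixed_point {a b : ℝ} (hab : a ≤ b) (f : ℝ → ℝ)
    (hf : ContinuousOn f (Set.Icc a b))
    (hmaps : Set.MapsTo f (Set.Icc a b) (Set.Icc a b))
    (x : ℝ) (hx : x ∈ Set.Icc a b) (m : ℕ) (hm : 3 ≤ m) (hodd : Odd m)
    (hper : IsLeastPeriod f x m)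
    (P : Set ℝ) (hP : P = (fun j : ℕ => f^[j] x) '' Set.Iio m)
    (e : ℝ) (he : e = f^[m - 1] (sInf P)) :
    ∃ v, sInf P ≤ v ∧ v < e ∧ f v = e ∧ ∃ z ∈ Set.Ioo v e, f z = z := by
  obtain ⟨hm0, hfm, hmin⟩ := hper
  have hPne : P.Nonempty := ⟨x, by rw [hP]; exact ⟨0, by simpa using hm0, rfl⟩⟩
  have hPfin : P.Finite := by rw [hP]; exact (Set.finite_Iio m).image _
  have hPsub : P ⊆ Set.Icc a b := by
    rw [hP]; rintro y ⟨j, hj, rfl⟩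
    clear hj
    induction j with
    | zero => simpa using hx
    | succ n ih =>
      show f^[n + 1] x ∈ Set.Icc a b
      rw [Function.iterate_succ_apply']
      exact hmaps ih
  set p := sInf P with hp
  have hpP : p ∈ P := hPne.csInf_mem hPfin
  have hple : ∀ y ∈ P, p ≤ y := fun y hy => csInf_le hPfin.bddBelow hy
  have hmapsP : ∀ y ∈ P, f y ∈ P := by
    rw [hP]; rintro y ⟨j, hj, rfl⟩
    rcases eq_or_lt_of_le (Nat.succ_le_of_lt hj) with h | h
    · exact ⟨0, by simpa using hm0, by
        show f^[0] x = f (f^[j] x)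
        rw [← Function.iterate_succ_apply' f j x, h, hfm, Function.iterate_zero_apply]⟩
    · exact ⟨j + 1, h, by
        show f^[j + 1] x = f (f^[j] x)
        rw [Function.iterate_succ_apply' f j x]⟩
  have hiterP : ∀ n : ℕ, ∀ y ∈ P, f^[n] y ∈ P := by
    intro n
    induction n with
    | zero => intro y hy; simpa using hy
    | succ k ih =>
      intro y hy
      rw [Function.iterate_succ_apply']
      exact hmapsP _ (ih y hy)
  obtain ⟨j, hj, hjp⟩ : ∃ j < m, f^[j] x = p := by
    have := hpP; rw [hP] at this; obtain ⟨j, hj, hjp⟩ := this; exact ⟨j, hj, hjp⟩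
  have hfmp : f^[m] p = p := by
    rw [← hjp, ← Function.iterate_add_apply, Nat.add_comm, Function.iterate_add_apply, hfm]
  have heP : e ∈ P := by rw [he]; exact hiterP (m - 1) p hpP
  have hfe : f e = p := by
    rw [he, ← Function.iterate_succ_apply' f (m - 1) p]
    have h1 : (m - 1).succ = m := by omega
    rw [h1, hfmp]
  have hep : p < e := by
    rcases lt_or_eq_of_le (hple e heP) with h | h
    · exact h
    -- p = e : then p is fixed, x = p, contradiction with least period
    exfalso
    have hfp : f p = p := by rw [← h] at hfe; exact hfe
    have hiterp : ∀ n : ℕ, f^[n] p = p := by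
      intro n
      induction n with
      | zero => rfl
      | succ k ih => rw [Function.iterate_succ_apply', ih, hfp]
    have hxp : x = p := by
      have : f^[m - j] (f^[j] x) = x := by
        rw [← Function.iterate_add_apply]
        have : m - j + j = m := by omega
        rw [this, hfm]
      rw [hjp, hiterp] at this
      exact this.symm
    have := hmin 1 one_pos (by omega)
    apply this
    rw [Function.iterate_one, hxp, hfp]
  have hkey : ∃ y ∈ P, y < e ∧ e ≤ f y := by
    by_contra hcon
    push_neg at hcon
    have hT : ∀ n : ℕ, f^[n] p ∈ P ∧ f^[n] p < e := by
      intro n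
      induction n with
      | zero => exact ⟨hpP, hep⟩
      | succ k ih =>
        rw [Function.iterate_succ_apply']
        exact ⟨hmapsP _ ih.1, hcon _ (hmapsP _ ih.1 |> fun _ => ih.1) ih.2⟩
    have := (hT (m - 1)).2
    rw [← he] at this
    exact lt_irrefl e this
  obtain ⟨y, hyP, hye, hfy⟩ := hkey
  have hay : a ≤ y := (hPsub hyP).1
  have heab : e ∈ Set.Icc a b := hPsub heP
  have hsub1 : Set.Icc y e ⊆ Set.Icc a b :=
    Set.Icc_subset_Icc hay heab.2
  have hivt : e ∈ f '' Set.Icc y e := by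
    apply intermediate_value_Icc' (le_of_lt hye) (hf.mono hsub1)
    constructor
    · rw [hfe]; exact le_of_lt hep
    · exact hfy
  obtain ⟨v, hv, hfv⟩ := hivt
  have hve : v < e := by
    rcases lt_or_eq_of_le hv.2 with h | h
    · exact h
    · exfalso; rw [h, hfe] at hfv; exact absurd hfv (ne_of_lt hep)
  have hav : a ≤ v := le_trans hay hv.1
  have hsub2 : Set.Icc v e ⊆ Set.Icc a b := Set.Icc_subset_Icc hav heab.2
  have hg : ContinuousOn (fun t => f t - t) (Set.Icc v e) :=
    (hf.mono hsub2).sub continuousOn_id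
  have hivt2 : (0 : ℝ) ∈ (fun t => f t - t) '' Set.Icc v e := by
    apply intermediate_value_Icc' (le_of_lt hve) hg
    constructor
    · simp only [hfe]; linarith
    · simp only [hfv]; linarith [hve]
  obtain ⟨z, hz, hgz⟩ := hivt2
  have hfz : f z = z := by
    have : f z - z = 0 := hgz
    linarith
  refine ⟨v, le_trans (hple y hyP) hv.1, hve, hfv, z, ⟨?_, ?_⟩, hfz⟩
  · rcases lt_or_eq_of_le hz.1 with h | h
    · exact h
    · exfalso; rw [← h] at hfz; rw [hfv] at hfz; exact absurd hfz (ne_of_gt hve)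
  · rcases lt_or_eq_of_le hz.2 with h | h
    · exact h
    · exfalso; rw [h, hfe] at hfz; exact absurd hfz (ne_of_lt hep)
end
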